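/- arXiv:2108.09015 — 2 statements merged into one kernel-verified Lean document; each statement's English description precedes it below -/
import Mathlib

section
/- Let ξ ~ Bin(q, 1/2), and let d, q be positive integers with q/d ≥ q^{1/3} (i.e., d ≤ q^{2/3}). Then Pr(q/d divides ξ) ≤ 2q^{-2} + (1/sqrt(q)) · ⌈(2 sqrt(q ln q) + 1) / (q/d)⌉, which is O(q^{-1/3} sqrt(ln q)) as q → ∞. -/
/-!
Let `t = √(q log q)`. A Chernoff bound with parameter `s = 4t/q`, together with
`cosh x ≤ exp (x²/2)`, gives `P(|ξ - q/2| > t) ≤ 2 exp(-2t²/q) = 2/q²`. Every single value has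
probability `C(q, k)/2^q ≤ 1/√q`, because `C(2n, n)² (2n + 1) ≤ 16ⁿ`, and the window
`|k - q/2| ≤ t` contains at most `⌈(2t + 1)/m⌉` multiples of `m = q/d`. Since `m ≥ q^{1/3}`,
the resulting bound is `O(q^{-1/3} √(log q))`.
-/

open Finset Filter

/-- The probability that a Binomial(q, 1/2) random variable equals k. -/
noncomputable def binomHalfProb (q k : ℕ) : ℝ :=
  (Nat.choose q k : ℝ) * (1 / 2) ^ k * (1 / 2) ^ (q - k)

/-- The bound `2 q⁻² + q^{-1/2} ⌈(2 √(q ln q) + 1) / (q/d)⌉` from the proof. -/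
noncomputable def divisibleProbBound (q d : ℕ) : ℝ :=
  2 / (q : ℝ) ^ 2 +
    (1 / Real.sqrt q) * (⌈(2 * Real.sqrt (q * Real.log q) + 1) / ((q / d : ℕ) : ℝ)⌉ : ℝ)

open Real

namespace Nat

theorem centralBinom_sq_mul_le (n : ℕ) : centralBinom n ^ 2 * (2 * n + 1) ≤ 16 ^ n := by
  induction n with
  | zero => simp
  | succ n ih =>
    have hrec := succ_mul_centralBinom_succ n
    refine Nat.le_of_mul_le_mul_left ?_ (pow_pos n.succ_pos 2)
    calc (n + 1) ^ 2 * (centralBinom (n + 1) ^ 2 * (2 * (n + 1) + 1))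
        = 4 * (2 * n + 1) * (2 * n + 3) * (centralBinom n ^ 2 * (2 * n + 1)) := by
          rw [← mul_assoc, ← mul_pow, hrec]; ring
      _ ≤ 4 * (2 * n + 1) * (2 * n + 3) * 16 ^ n := by gcongr
      _ ≤ (n + 1) ^ 2 * 16 * 16 ^ n := Nat.mul_le_mul_right _ (by nlinarith)
      _ = (n + 1) ^ 2 * 16 ^ (n + 1) := by ring

theorem choose_sq_mul_le (q k : ℕ) : q.choose k ^ 2 * q ≤ 4 ^ q := by
  obtain ⟨n, rfl | rfl⟩ := q.even_or_odd'
  · calc (2 * n).choose k ^ 2 * (2 * n) ≤ centralBinom n ^ 2 * (2 * n + 1) := by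
          gcongr
          · exact choose_le_centralBinom k n
          · omega
      _ ≤ 16 ^ n := centralBinom_sq_mul_le n
      _ = 4 ^ (2 * n) := by rw [pow_mul]; norm_num
  · have hmid : (2 * n + 1) / 2 = n := by omega
    have hcb : centralBinom (n + 1) = 2 * (2 * n + 1).choose n := by
      rw [centralBinom_eq_two_mul_choose, show 2 * (n + 1) = 2 * n + 1 + 1 by ring,
        choose_succ_succ, choose_symm_half]
      ring
    have hchoose := hmid ▸ choose_le_middle k (2 * n + 1)
    refine Nat.le_of_mul_le_mul_left ?_ (show 0 < 4 by norm_num)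
    calc 4 * ((2 * n + 1).choose k ^ 2 * (2 * n + 1))
        ≤ centralBinom (n + 1) ^ 2 * (2 * (n + 1) + 1) := by
          rw [hcb, mul_pow, mul_assoc]; norm_num; gcongr; omega
      _ ≤ 16 ^ (n + 1) := centralBinom_sq_mul_le (n + 1)
      _ = 4 * 4 ^ (2 * n + 1) := by rw [pow_succ, pow_succ, pow_mul]; norm_num; ring

end Nat

theorem binomHalfProb_nonneg (q k : ℕ) : 0 ≤ binomHalfProb q k := by
  unfold binomHalfProb; positivity

theorem binomHalfProb_eq_choose_div {q k : ℕ} (hk : k ≤ q) :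
    binomHalfProb q k = q.choose k / 2 ^ q := by
  rw [binomHalfProb, mul_assoc, ← pow_add, Nat.add_sub_cancel' hk, one_div_pow, mul_one_div]

theorem binomHalfProb_le_inv_sqrt {q : ℕ} (hq : 0 < q) (k : ℕ) :
    binomHalfProb q k ≤ 1 / √q := by
  rcases le_or_gt k q with hk | hk
  · have hsq : √(q.choose k ^ 2 * q : ℝ) ≤ √(4 ^ q : ℝ) := by
      gcongr; exact_mod_cast Nat.choose_sq_mul_le q k
    rw [sqrt_mul (by positivity), sqrt_sq (by positivity),
      show (4 : ℝ) ^ q = (2 ^ q) ^ 2 by rw [← pow_mul, mul_comm, pow_mul]; norm_num,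
      sqrt_sq (by positivity)] at hsq
    rw [binomHalfProb_eq_choose_div hk, div_le_div_iff₀ (by positivity) (by positivity), one_mul]
    exact hsq
  · simp [binomHalfProb, Nat.choose_eq_zero_of_lt hk]

theorem sum_binomHalfProb_mul_exp (q : ℕ) (s : ℝ) :
    ∑ k ∈ range (q + 1), binomHalfProb q k * exp (s * (k - q / 2)) = cosh (s / 2) ^ q := by
  rw [cosh_eq, add_div, add_pow]
  refine sum_congr rfl fun k hk => ?_
  have hkq : k ≤ q := Nat.lt_succ_iff.mp (mem_range.mp hk)
  have hexp : exp (s * (k - q / 2)) = exp (s / 2) ^ k * exp (-(s / 2)) ^ (q - k) := by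
    rw [← exp_nat_mul, ← exp_nat_mul, ← exp_add, Nat.cast_sub hkq]
    ring_nf
  rw [binomHalfProb, hexp]
  simp only [div_eq_mul_inv, mul_pow, one_mul]
  ring

theorem sum_binomHalfProb_abs_sub_gt_le {q : ℕ} (hq : 0 < q) {t : ℝ} (ht : 0 ≤ t) :
    ∑ k ∈ range (q + 1) with t < |((k : ℕ) : ℝ) - q / 2|, binomHalfProb q k
      ≤ 2 * exp (-(2 * t ^ 2 / q)) := by
  have hq' : (0 : ℝ) < q := by exact_mod_cast hq
  set s := 4 * t / q
  have hs : 0 ≤ s := by positivity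
  set w : ℕ → ℝ := fun k => exp (-(s * t)) * (exp (s * (k - q / 2)) + exp (-(s * (k - q / 2))))
  have hw : ∀ k : ℕ, t < |((k : ℕ) : ℝ) - q / 2| → 1 ≤ w k := fun k hk => by
    calc (1 : ℝ) ≤ exp (-(s * t)) * exp (|s * (k - q / 2)|) := by
          rw [← exp_add, one_le_exp_iff, abs_mul, abs_of_nonneg hs]
          nlinarith
      _ ≤ w k := mul_le_mul_of_nonneg_left (exp_abs_le _) (exp_nonneg _)
  calc ∑ k ∈ range (q + 1) with t < |((k : ℕ) : ℝ) - q / 2|, binomHalfProb q k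
      ≤ ∑ k ∈ range (q + 1) with t < |((k : ℕ) : ℝ) - q / 2|, binomHalfProb q k * w k :=
        sum_le_sum fun k hk =>
          le_mul_of_one_le_right (binomHalfProb_nonneg q k) (hw k (mem_filter.mp hk).2)
    _ ≤ ∑ k ∈ range (q + 1), binomHalfProb q k * w k :=
        sum_le_sum_of_subset_of_nonneg (filter_subset _ _) fun k _ _ =>
          mul_nonneg (binomHalfProb_nonneg q k) (by positivity)
    _ = exp (-(s * t)) * (2 * cosh (s / 2) ^ q) := by
        simp only [w, mul_left_comm _ (exp _), ← mul_sum, mul_add, sum_add_distrib,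
          ← neg_mul, sum_binomHalfProb_mul_exp, neg_div, cosh_neg]
        ring
    _ ≤ exp (-(s * t)) * (2 * exp ((s / 2) ^ 2 / 2) ^ q) := by
        refine mul_le_mul_of_nonneg_left (mul_le_mul_of_nonneg_left ?_ zero_le_two) (exp_nonneg _)
        exact pow_le_pow_left₀ (cosh_pos _).le (cosh_le_exp_half_sq _) q
    _ = 2 * exp (-(2 * t ^ 2 / q)) := by
        rw [← exp_nat_mul, mul_left_comm, ← exp_add]
        congr 2
        simp only [s]
        field_simp
        ring

/-- `k ↦ k / m` maps these multiples injectively into `⌈(2t + 1)/m⌉` consecutive integers. -/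
theorem card_filter_dvd_abs_sub_le (s : Finset ℕ) {m : ℕ} (hm : 0 < m) (c t : ℝ) :
    #{k ∈ s | m ∣ k ∧ |((k : ℕ) : ℝ) - c| ≤ t} ≤ ⌈(2 * t + 1) / m⌉₊ := by
  have hm' : (0 : ℝ) < m := by exact_mod_cast hm
  set lo := ⌈(c - t) / m⌉₊
  refine (card_le_card_of_injOn (t := Ico lo (lo + ⌈(2 * t + 1) / m⌉₊)) (· / m) ?_ ?_).trans
    (by simp)
  · intro k hk
    obtain ⟨-, ⟨j, rfl⟩, hkc⟩ := mem_filter.mp hk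
    obtain ⟨hlow, hup⟩ := abs_sub_le_iff.mp hkc
    push_cast at hlow hup
    simp only [coe_Ico, Set.mem_Ico, Nat.mul_div_cancel_left j hm]
    rw [Nat.ceil_le, div_le_iff₀ hm']
    refine ⟨by linarith, ?_⟩
    have hlo : (c - t) / m ≤ lo := Nat.le_ceil _
    have hN : (2 * t + 1) / m ≤ ⌈(2 * t + 1) / m⌉₊ := Nat.le_ceil _
    have hj : (j : ℝ) < (c - t) / m + (2 * t + 1) / m := by
      rw [← add_div, lt_div_iff₀ hm']; linarith
    exact_mod_cast (show (j : ℝ) < lo + ⌈(2 * t + 1) / m⌉₊ by linarith)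
  · intro k hk l hl hkl
    exact (Nat.div_left_inj (mem_filter.mp hk).2.1 (mem_filter.mp hl).2.1).mp hkl

theorem sum_binomHalfProb_dvd_le {q m : ℕ} (hq : 0 < q) (hm : 0 < m) :
    ∑ k ∈ range (q + 1) with m ∣ k, binomHalfProb q k
      ≤ 2 / (q : ℝ) ^ 2 + 1 / √q * (⌈(2 * √(q * log q) + 1) / m⌉ : ℝ) := by
  have hq' : (0 : ℝ) < q := by exact_mod_cast hq
  set t := √(q * log q)
  have ht : 0 ≤ t := sqrt_nonneg _
  have hfar : ∑ k ∈ range (q + 1) with t < |((k : ℕ) : ℝ) - q / 2|, binomHalfProb q k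
      ≤ 2 / (q : ℝ) ^ 2 := by
    refine (sum_binomHalfProb_abs_sub_gt_le hq ht).trans_eq ?_
    have hlog : 2 * (q * log q) / q = log ((q : ℝ) ^ 2) := by
      rw [log_pow]; push_cast; field_simp
    rw [sq_sqrt (mul_nonneg hq'.le (log_nonneg (by exact_mod_cast hq))), hlog, exp_neg,
      exp_log (by positivity), div_eq_mul_inv]
  have hnear : ∑ k ∈ range (q + 1) with m ∣ k ∧ |((k : ℕ) : ℝ) - q / 2| ≤ t, binomHalfProb q k
      ≤ 1 / √q * (⌈(2 * t + 1) / m⌉ : ℝ) := by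
    calc _ ≤ #{k ∈ range (q + 1) | m ∣ k ∧ |((k : ℕ) : ℝ) - q / 2| ≤ t} • (1 / √q) :=
          sum_le_card_nsmul _ _ _ fun k _ => binomHalfProb_le_inv_sqrt hq k
      _ ≤ ⌈(2 * t + 1) / m⌉₊ * (1 / √q) := by
          rw [nsmul_eq_mul]
          gcongr
          exact_mod_cast card_filter_dvd_abs_sub_le _ hm _ _
      _ = 1 / √q * (⌈(2 * t + 1) / m⌉ : ℝ) := by
          rw [natCast_ceil_eq_intCast_ceil (by positivity), mul_comm]
  have hsub : {k ∈ range (q + 1) | m ∣ k ∧ ¬|((k : ℕ) : ℝ) - q / 2| ≤ t}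
      ⊆ {k ∈ range (q + 1) | t < |((k : ℕ) : ℝ) - q / 2|} := by
    intro k
    simp only [mem_filter, not_le]
    tauto
  rw [← sum_filter_add_sum_filter_not _ (fun k : ℕ => |((k : ℕ) : ℝ) - q / 2| ≤ t),
    filter_filter, filter_filter, add_comm (2 / _)]
  exact add_le_add hnear <|
    (sum_le_sum_of_subset_of_nonneg hsub fun k _ _ => binomHalfProb_nonneg q k).trans hfar

theorem divisibleProbBound_nonneg (q d : ℕ) : 0 ≤ divisibleProbBound q d := by
  have hceil : (0 : ℝ) ≤ ⌈(2 * √(q * log q) + 1) / ((q / d : ℕ) : ℝ)⌉ := by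
    exact_mod_cast Int.ceil_nonneg (by positivity)
  unfold divisibleProbBound
  positivity

theorem inv_sqrt_mul_ceil_le {q m : ℝ} (hq : 0 < q) (hm : 1 ≤ m) :
    1 / √q * (⌈(2 * √(q * log q) + 1) / m⌉ : ℝ) ≤ 2 * √(log q) / m + 2 / √q := by
  have hsq : 0 < √q := sqrt_pos.mpr hq
  have hceil := (Int.ceil_lt_add_one ((2 * √(q * log q) + 1) / m)).le
  have hsplit : 1 / √q * ((2 * √(q * log q) + 1) / m + 1)
      = 2 * √(log q) / m + 1 / (√q * m) + 1 / √q := by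
    rw [sqrt_mul hq.le]
    field_simp
  have hsmall : 1 / (√q * m) ≤ 1 / √q :=
    one_div_le_one_div_of_le hsq (le_mul_of_one_le_right hsq.le hm)
  calc 1 / √q * (⌈(2 * √(q * log q) + 1) / m⌉ : ℝ)
      ≤ 1 / √q * ((2 * √(q * log q) + 1) / m + 1) :=
        mul_le_mul_of_nonneg_left hceil (one_div_nonneg.mpr hsq.le)
    _ ≤ 2 * √(log q) / m + 1 / √q + 1 / √q := by rw [hsplit]; gcongr
    _ = 2 * √(log q) / m + 2 / √q := by ring

theorem isBigO_divisibleProbBound (d : ℕ → ℕ)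
    (hd : ∀ q : ℕ, 0 < q → (q : ℝ) ^ ((1 : ℝ) / 3) ≤ ((q / d q : ℕ) : ℝ)) :
    (fun q : ℕ => divisibleProbBound q (d q)) =O[atTop]
      fun q : ℕ => (q : ℝ) ^ (-(1 / 3 : ℝ)) * √(log q) := by
  refine Asymptotics.IsBigO.of_bound 6 ?_
  filter_upwards [eventually_ge_atTop 3] with q hq3
  have hq3' : (3 : ℝ) ≤ q := by exact_mod_cast hq3
  have hq0 : (0 : ℝ) < q := by linarith
  set r := (q : ℝ) ^ (-(1 / 3 : ℝ))
  set m : ℝ := ((q / d q : ℕ) : ℝ)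
  have hr : 0 < r := rpow_pos_of_pos hq0 _
  have hrm : r⁻¹ ≤ m := by
    rw [show r = _ from rpow_neg hq0.le _, inv_inv]; exact hd q (by omega)
  have hr1 : r ≤ 1 := rpow_le_one_of_one_le_of_nonpos (by linarith) (by norm_num)
  have hlog : 1 ≤ √(log q) := by
    rw [one_le_sqrt, le_log_iff_exp_le hq0]
    linarith [exp_one_lt_d9]
  have hsq : 1 / √q ≤ r := by
    rw [sqrt_eq_rpow, one_div, ← rpow_neg hq0.le]
    exact rpow_le_rpow_of_exponent_le (by linarith) (by norm_num)
  have hq_sq : 1 / (q : ℝ) ^ 2 ≤ 1 / √q :=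
    one_div_le_one_div_of_le (sqrt_pos.mpr hq0) ((sqrt_le_left (by positivity)).mpr
      (by rw [← pow_mul]; exact le_self_pow₀ (by linarith) (by norm_num)))
  have hlog_m : √(log q) / m ≤ r * √(log q) := by
    calc √(log q) / m ≤ √(log q) / r⁻¹ :=
          div_le_div_of_nonneg_left (sqrt_nonneg _) (inv_pos.mpr hr) hrm
      _ = r * √(log q) := by rw [div_inv_eq_mul, mul_comm]
  have hbound : divisibleProbBound q (d q) ≤ 2 / (q : ℝ) ^ 2 + 2 * √(log q) / m + 2 / √q := by
    rw [add_assoc]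
    exact add_le_add le_rfl (inv_sqrt_mul_ceil_le hq0 (((one_le_inv₀ hr).mpr hr1).trans hrm))
  have hr_le : r ≤ r * √(log q) := le_mul_of_one_le_right hr.le hlog
  rw [norm_of_nonneg (divisibleProbBound_nonneg _ _), norm_of_nonneg (by positivity)]
  calc divisibleProbBound q (d q) ≤ 2 / (q : ℝ) ^ 2 + 2 * √(log q) / m + 2 / √q := hbound
    _ = 2 * (1 / (q : ℝ) ^ 2) + 2 * (√(log q) / m) + 2 * (1 / √q) := by ring
    _ ≤ 6 * (r * √(log q)) := by linarith

theorem binomial_divisible_by_large_prob :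
    (∀ q d : ℕ, 0 < q → 0 < d → d ∣ q → ((q : ℝ)) ^ ((1 : ℝ) / 3) ≤ ((q / d : ℕ) : ℝ) →
      ∑ k ∈ Finset.range (q + 1), (if (q / d) ∣ k then binomHalfProb q k else 0)
        ≤ divisibleProbBound q d) ∧
    (∀ d : ℕ → ℕ, (∀ q, 0 < q → 0 < d q ∧ d q ∣ q ∧
        ((q : ℝ)) ^ ((1 : ℝ) / 3) ≤ ((q / d q : ℕ) : ℝ)) →
      (fun q : ℕ => divisibleProbBound q (d q)) =O[atTop]
        (fun q : ℕ => ((q : ℝ)) ^ (-(1 / 3 : ℝ)) * Real.sqrt (Real.log q))) := by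
  refine ⟨fun q d hq _ _ hpow => ?_,
    fun d hd => isBigO_divisibleProbBound d fun q hq => (hd q hq).2.2⟩
  have hm : 1 ≤ ((q / d : ℕ) : ℝ) := (one_le_rpow (by exact_mod_cast hq) (by norm_num)).trans hpow
  rw [← sum_filter]
  exact sum_binomHalfProb_dvd_le hq (by exact_mod_cast hm)
end

section
/- Let q ≥ r ≥ 1, q > r, and let I₁, I₂ be sets with |I₁| = q, |I₂| = r, |I₁ ∩ I₂| = k. Suppose a row of a random binary matrix (i.i.d. Bernoulli(1/2) entries) is 'bad' for (I₁, I₂), meaning the fraction of ones among the columns in I₁ equals the fraction among the columns in I₂. If q - k ≥ 1, then the probability the row is bad is at most max_l C(q-k, l)/2^{q-k} ≤ 1/2. -/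
/-!
Fix the entries of a row outside `I₁ \ I₂`. As `I₂` misses `I₁ \ I₂`, this fixes the
fraction of ones on `I₂`, and for a bad row then also the number of ones on `I₁ \ I₂`;
of the `2 ^ n` ways to fill in `I₁ \ I₂` (`n = |I₁ \ I₂|`), only `C(n, l) ≤ max_l C(n, l)`
have that number `l` of ones. Finally `C(m + 1, l + 1) = C(m, l) + C(m, l + 1)` is a sum of
two distinct terms of `∑ C(m, i) = 2 ^ m`, whence `max_l C(n, l) ≤ 2 ^ (n - 1)`.
-/
open Finset
open scoped Classical

/-- A row `x` is bad for the pair of coalitions `(I₁, I₂)` if the fraction of ones among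
the columns in `I₁` equals the fraction of ones among the columns in `I₂`. -/
def BadRow {M : ℕ} (I₁ I₂ : Finset (Fin M)) (x : Fin M → Bool) : Prop :=
  ((I₁.filter (fun i => x i = true)).card : ℝ) / I₁.card =
    ((I₂.filter (fun i => x i = true)).card : ℝ) / I₂.card

theorem Nat.choose_le_two_pow_pred {n : ℕ} (hn : n ≠ 0) (l : ℕ) :
    n.choose l ≤ 2 ^ (n - 1) := by
  obtain ⟨m, rfl⟩ := Nat.exists_eq_succ_of_ne_zero hn
  rw [Nat.succ_sub_one]
  rcases l with _ | k
  · simpa using Nat.one_le_two_pow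
  rw [Nat.choose_succ_succ]
  rcases lt_or_ge k m with hkm | hmk
  · rw [← Nat.sum_range_choose m]
    exact add_le_sum (fun _ _ => Nat.zero_le _) (mem_range.2 (by omega)) (mem_range.2 (by omega))
      (by omega)
  · rw [Nat.choose_eq_zero_of_lt (show m < k + 1 by omega), add_zero]
    exact m.choose_le_two_pow k

theorem card_filter_eq_of_eqOn {ι : Type*} {s : Finset ι} {x y : ι → Bool}
    (h : ∀ i ∈ s, x i = y i) : #{i ∈ s | x i = true} = #{i ∈ s | y i = true} :=
  congrArg card (filter_congr fun i hi => by rw [h i hi])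

theorem card_filter_eq_card_filter_inter_add_card_filter_sdiff {ι : Type*} [DecidableEq ι]
    (s t : Finset ι) (p : ι → Prop) [DecidablePred p] :
    #{i ∈ s | p i} = #{i ∈ s ∩ t | p i} + #{i ∈ s \ t | p i} := by
  rw [← card_inter_add_card_sdiff {i ∈ s | p i} t, filter_inter]
  congr 2
  ext i
  simp only [mem_sdiff, mem_filter]
  tauto

theorem card_le_choose_of_eqOn_compl {ι : Type*} {A : Finset ι} {T : Finset (ι → Bool)}
    {g : ι → Bool} {ℓ : ℕ} (hg : ∀ x ∈ T, ∀ i ∉ A, x i = g i)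
    (hℓ : ∀ x ∈ T, #{i ∈ A | x i = true} = ℓ) : #T ≤ (#A).choose ℓ := by
  rw [← card_powersetCard]
  refine card_le_card_of_injOn (fun x => {i ∈ A | x i = true})
    (fun x hx => mem_powersetCard.2 ⟨filter_subset _ _, hℓ x hx⟩) fun x hx y hy hxy => ?_
  funext i
  by_cases hi : i ∈ A
  · simpa [hi] using congrArg (i ∈ ·) hxy
  · rw [hg x hx i hi, hg y hy i hi]

theorem card_mul_two_pow_le_of_forall_eqOn_compl {ι : Type*} [Fintype ι] [DecidableEq ι]
    (A : Finset ι) (S : Finset (ι → Bool))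
    (hS : ∀ x ∈ S, ∀ y ∈ S, (∀ i ∉ A, x i = y i) →
      #{i ∈ A | x i = true} = #{i ∈ A | y i = true}) :
    #S * 2 ^ #A ≤ (range (#A + 1)).sup (fun l => (#A).choose l) * 2 ^ Fintype.card ι := by
  set C := (range (#A + 1)).sup fun l => (#A).choose l
  let restrict : (ι → Bool) → ((Aᶜ : Finset ι) → Bool) := fun x i => x i
  have hfiber : ∀ g ∈ S.image restrict, #{x ∈ S | restrict x = g} ≤ C := by
    intro g hg
    obtain ⟨x₀, hx₀, rfl⟩ := mem_image.1 hg
    have hagree : ∀ x ∈ {x ∈ S | restrict x = restrict x₀}, ∀ i ∉ A, x i = x₀ i :=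
      fun x hx i hi => congrFun (mem_filter.1 hx).2 ⟨i, mem_compl.2 hi⟩
    calc _ ≤ (#A).choose #{i ∈ A | x₀ i = true} :=
          card_le_choose_of_eqOn_compl hagree
            fun x hx => hS x (mem_filter.1 hx).1 x₀ hx₀ (hagree x hx)
      _ ≤ C := le_sup (mem_range.2 (Nat.lt_succ_of_le (card_le_card (filter_subset _ _))))
  have himage : #(S.image restrict) ≤ 2 ^ #Aᶜ := by
    simpa only [Fintype.card_fun, Fintype.card_bool, Fintype.card_coe] using
      card_le_univ (S.image restrict)
  calc #S * 2 ^ #A ≤ C * 2 ^ #Aᶜ * 2 ^ #A :=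
        Nat.mul_le_mul_right _
          ((card_le_mul_card_image S C hfiber).trans (Nat.mul_le_mul_left C himage))
    _ = C * 2 ^ Fintype.card ι := by rw [mul_assoc, ← pow_add, card_compl_add_card]

theorem BadRow.card_filter_sdiff_eq {M : ℕ} {I₁ I₂ : Finset (Fin M)} {x y : Fin M → Bool}
    (hI₁ : #I₁ ≠ 0) (hx : BadRow I₁ I₂ x) (hy : BadRow I₁ I₂ y)
    (hxy : ∀ i ∉ I₁ \ I₂, x i = y i) :
    #{i ∈ I₁ \ I₂ | x i = true} = #{i ∈ I₁ \ I₂ | y i = true} := by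
  have hI₂ : #{i ∈ I₂ | x i = true} = #{i ∈ I₂ | y i = true} :=
    card_filter_eq_of_eqOn fun i hi => hxy i fun h => (mem_sdiff.1 h).2 hi
  have hinter : #{i ∈ I₁ ∩ I₂ | x i = true} = #{i ∈ I₁ ∩ I₂ | y i = true} :=
    card_filter_eq_of_eqOn fun i hi => hxy i fun h => (mem_sdiff.1 h).2 (mem_inter.1 hi).2
  have hI₁' : #{i ∈ I₁ | x i = true} = #{i ∈ I₁ | y i = true} := by
    unfold BadRow at hx hy
    rw [hI₂, ← hy, div_left_inj' (Nat.cast_ne_zero.2 hI₁)] at hx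
    exact_mod_cast hx
  rw [card_filter_eq_card_filter_inter_add_card_filter_sdiff I₁ I₂,
    card_filter_eq_card_filter_inter_add_card_filter_sdiff I₁ I₂ fun i => y i = true] at hI₁'
  omega

theorem bad_row_prob_le_general {M q : ℕ} (I₁ I₂ : Finset (Fin M))
    (hq : I₁.card = q)
    (hk : 1 ≤ q - (I₁ ∩ I₂).card) :
    (((Finset.univ.filter (fun x : Fin M → Bool => BadRow I₁ I₂ x)).card : ℝ) / 2 ^ M
        ≤ (((Finset.range (q - (I₁ ∩ I₂).card + 1)).sup
              (fun l => Nat.choose (q - (I₁ ∩ I₂).card) l) : ℕ) : ℝ) /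
            2 ^ (q - (I₁ ∩ I₂).card)) ∧
    ((((Finset.range (q - (I₁ ∩ I₂).card + 1)).sup
          (fun l => Nat.choose (q - (I₁ ∩ I₂).card) l) : ℕ) : ℝ) /
        2 ^ (q - (I₁ ∩ I₂).card) ≤ 1 / 2) := by
  have hn : #(I₁ \ I₂) = q - #(I₁ ∩ I₂) := by rw [card_sdiff, inter_comm, hq]
  rw [← hn] at hk ⊢
  have hcount := card_mul_two_pow_le_of_forall_eqOn_compl (I₁ \ I₂) {x | BadRow I₁ I₂ x}
    fun x hx y hy => (mem_filter.1 hx).2.card_filter_sdiff_eq (by omega) (mem_filter.1 hy).2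
  rw [Fintype.card_fin] at hcount
  constructor
  · rw [div_le_div_iff₀ (by positivity) (by positivity)]
    exact_mod_cast hcount
  · rw [div_le_div_iff₀ (by positivity) two_pos, one_mul]
    exact_mod_cast (Nat.mul_le_mul_right 2 (Finset.sup_le fun l _ =>
      Nat.choose_le_two_pow_pred (by omega) l)).trans_eq (Nat.two_pow_pred_mul_two (by omega))

theorem bad_row_prob_le {M q r : ℕ} (I₁ I₂ : Finset (Fin M))
    (hq : I₁.card = q) (hr : I₂.card = r) (hr1 : 1 ≤ r) (hrq : r < q)
    (hk : 1 ≤ q - (I₁ ∩ I₂).card) :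
    (((Finset.univ.filter (fun x : Fin M → Bool => BadRow I₁ I₂ x)).card : ℝ) / 2 ^ M
        ≤ (((Finset.range (q - (I₁ ∩ I₂).card + 1)).sup
              (fun l => Nat.choose (q - (I₁ ∩ I₂).card) l) : ℕ) : ℝ) /
            2 ^ (q - (I₁ ∩ I₂).card)) ∧
    ((((Finset.range (q - (I₁ ∩ I₂).card + 1)).sup
          (fun l => Nat.choose (q - (I₁ ∩ I₂).card) l) : ℕ) : ℝ) /
        2 ^ (q - (I₁ ∩ I₂).card) ≤ 1 / 2) :=
  bad_row_prob_le_general I₁ I₂ hq hk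
end
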